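/- Fix a > 0 and x₂ > 0. The function x₁ ↦ exp(−V_a(x₁, x₂)) has derivative exp(−V_a(x₁,x₂))·Φ(a/2 − (1/a)·log(x₁/x₂))/x₁² at each x₁ > 0, and is strictly increasing on (0, ∞); i.e., the bivariate Brown–Resnick distribution function is strictly increasing in each argument. -/

import Mathlib

open Real MeasureTheory Filter Topology

/-- The standard normal density φ(t) = (2π)^{-1/2} e^{-t²/2}. -/
noncomputable def stdNormalPDF (t : ℝ) : ℝ :=
  (Real.sqrt (2 * Real.pi))⁻¹ * Real.exp (-t ^ 2 / 2)

/-- The standard normal cumulative distribution function Φ. -/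
noncomputable def stdNormalCDF (t : ℝ) : ℝ :=
  ∫ u in Set.Iic t, stdNormalPDF u

/-- The bivariate Brown–Resnick exponent measure V_a(x₁, x₂). -/
noncomputable def brV (a x₁ x₂ : ℝ) : ℝ :=
  (1 / x₁) * stdNormalCDF (a / 2 - (1 / a) * Real.log (x₁ / x₂)) +
    (1 / x₂) * stdNormalCDF (a / 2 - (1 / a) * Real.log (x₂ / x₁))

/-!
Write `ℓ = log (x₁ / x₂)`, so that `V_a(x₁, x₂) = Φ(a/2 - ℓ/a) / x₁ + Φ(a/2 + ℓ/a) / x₂`.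
Differentiating in `x₁` produces, besides `-Φ(a/2 - ℓ/a) / x₁²`, two density terms which cancel
because `φ(a/2 + ℓ/a) = e^{-ℓ} φ(a/2 - ℓ/a) = (x₂ / x₁) φ(a/2 - ℓ/a)`.
Hence `∂V_a/∂x₁ = -Φ(a/2 - ℓ/a) / x₁² < 0`, and `exp (-V_a)` has a positive derivative.
-/

theorem hasDerivAt_integral_Iic {E : Type*} [NormedAddCommGroup E] [NormedSpace ℝ E]
    [CompleteSpace E] {f : ℝ → E} (hf : Integrable f) {x : ℝ} (hx : ContinuousAt f x) :
    HasDerivAt (fun y => ∫ t in Set.Iic y, f t) (f x) x := by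
  have hsplit : ∀ y, ∫ t in Set.Iic y, f t = (∫ t in Set.Iic 0, f t) + ∫ t in (0 : ℝ)..y, f t :=
    fun y => by rw [← intervalIntegral.integral_Iic_sub_Iic hf.integrableOn hf.integrableOn,
      add_sub_cancel]
  rw [funext hsplit]
  exact (intervalIntegral.integral_hasDerivAt_right hf.intervalIntegrable
    hf.aestronglyMeasurable.stronglyMeasurableAtFilter hx).const_add _

theorem stdNormalPDF_eq_gaussianPDFReal : stdNormalPDF = ProbabilityTheory.gaussianPDFReal 0 1 := by
  funext t
  simp [stdNormalPDF, ProbabilityTheory.gaussianPDFReal]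

theorem integrable_stdNormalPDF : Integrable stdNormalPDF :=
  stdNormalPDF_eq_gaussianPDFReal ▸ ProbabilityTheory.integrable_gaussianPDFReal 0 1

theorem stdNormalPDF_pos (t : ℝ) : 0 < stdNormalPDF t := by
  unfold stdNormalPDF
  positivity

theorem hasDerivAt_stdNormalCDF (t : ℝ) : HasDerivAt stdNormalCDF (stdNormalPDF t) t := by
  have hcont : Continuous stdNormalPDF := by unfold stdNormalPDF; fun_prop
  exact hasDerivAt_integral_Iic integrable_stdNormalPDF hcont.continuousAt

theorem stdNormalCDF_pos (t : ℝ) : 0 < stdNormalCDF t := by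
  refine (setIntegral_pos_iff_support_of_nonneg_ae (ae_of_all _ fun u => (stdNormalPDF_pos u).le)
    integrable_stdNormalPDF.integrableOn).mpr ?_
  rw [Function.support_eq_univ fun u => (stdNormalPDF_pos u).ne', Set.univ_inter]
  simp

theorem stdNormalPDF_half_add (a ℓ : ℝ) (ha : a ≠ 0) :
    stdNormalPDF (a / 2 + (1 / a) * ℓ) = exp (-ℓ) * stdNormalPDF (a / 2 - (1 / a) * ℓ) := by
  unfold stdNormalPDF
  rw [mul_left_comm, ← exp_add]
  congr 2
  field_simp
  ring

theorem brV_eq_log_div_left (a x₁ x₂ : ℝ) :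
    brV a x₁ x₂ = x₁⁻¹ * stdNormalCDF (a / 2 - (1 / a) * log (x₁ / x₂)) +
      (1 / x₂) * stdNormalCDF (a / 2 + (1 / a) * log (x₁ / x₂)) := by
  rw [brV, one_div, ← inv_div x₁ x₂, log_inv, mul_neg, sub_neg_eq_add]

theorem hasDerivAt_brV_left {a x₁ x₂ : ℝ} (ha : a ≠ 0) (hx₁ : 0 < x₁) (hx₂ : 0 < x₂) :
    HasDerivAt (fun t => brV a t x₂)
      (-(stdNormalCDF (a / 2 - (1 / a) * log (x₁ / x₂)) / x₁ ^ 2)) x₁ := by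
  have hℓ : HasDerivAt (fun t => log (t / x₂)) (1 / x₁) x₁ := by
    refine (((hasDerivAt_id' x₁).div_const x₂).log (by positivity)).congr_deriv ?_
    field_simp
  have hexp : exp (-log (x₁ / x₂)) = x₂ / x₁ := by
    rw [exp_neg, exp_log (by positivity), inv_div]
  have hsum := ((hasDerivAt_inv hx₁.ne').mul
      ((hasDerivAt_stdNormalCDF _).comp x₁ ((hℓ.const_mul (1 / a)).const_sub (a / 2)))).add
    (((hasDerivAt_stdNormalCDF _).comp x₁ ((hℓ.const_mul (1 / a)).const_add (a / 2))).const_mul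
      (1 / x₂))
  rw [funext (brV_eq_log_div_left a · x₂)]
  refine hsum.congr_deriv ?_
  dsimp only [Function.comp_apply]
  rw [stdNormalPDF_half_add a _ ha, hexp]
  field_simp
  ring

theorem stmt9 (a x₂ : ℝ) (ha : 0 < a) (hx₂ : 0 < x₂) :
    (∀ x₁ : ℝ, 0 < x₁ →
      HasDerivAt (fun t => Real.exp (-brV a t x₂))
        (Real.exp (-brV a x₁ x₂) *
          stdNormalCDF (a / 2 - (1 / a) * Real.log (x₁ / x₂)) / x₁ ^ 2) x₁) ∧
    StrictMonoOn (fun x₁ => Real.exp (-brV a x₁ x₂)) (Set.Ioi 0) := by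
  have hderiv : ∀ x₁ : ℝ, 0 < x₁ →
      HasDerivAt (fun t => Real.exp (-brV a t x₂))
        (Real.exp (-brV a x₁ x₂) *
          stdNormalCDF (a / 2 - (1 / a) * Real.log (x₁ / x₂)) / x₁ ^ 2) x₁ := fun x₁ hx₁ => by
    refine (hasDerivAt_brV_left ha.ne' hx₁ hx₂).neg.exp.congr_deriv ?_
    dsimp only [Pi.neg_apply]
    ring
  refine ⟨hderiv, strictMonoOn_of_deriv_pos (convex_Ioi 0)
    (fun x hx => (hderiv x hx).continuousAt.continuousWithinAt) fun x hx => ?_⟩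
  rw [interior_Ioi] at hx
  rw [(hderiv x hx).deriv]
  exact div_pos (mul_pos (exp_pos _) (stdNormalCDF_pos _)) (pow_pos hx 2)
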